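/- arXiv:1309.3188 — 3 statements merged into one kernel-verified Lean document; each statement's English description precedes it below -/
import Mathlib

section
/- If a Novikov algebra has a left unity e (e·a = a for all a), then the algebra is commutative and associative. -/
section RightCommutative

variable {M : Type*} [Mul M]

theorem mul_comm_of_mul_right_comm_of_left_identity (h : ∀ a b c : M, a * b * c = a * c * b)
    {e : M} (he : ∀ a : M, e * a = a) (a b : M) : a * b = b * a := by
  simpa only [he] using h e a b

theorem mul_assoc_of_mul_right_comm_of_mul_comm (h : ∀ a b c : M, a * b * c = a * c * b)
    (comm : ∀ a b : M, a * b = b * a) (a b c : M) : a * b * c = a * (b * c) :=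
  calc a * b * c = b * a * c := by rw [comm a b]
    _ = b * c * a := h b a c
    _ = a * (b * c) := comm _ _

end RightCommutative

theorem novikov_left_unity_comm_assoc_general {A : Type*} [NonUnitalNonAssocRing A]
    (h1 : ∀ a b c : A, (a * b) * c = (a * c) * b)
    (e : A) (he : ∀ a : A, e * a = a) :
    (∀ a b : A, a * b = b * a) ∧ (∀ a b c : A, (a * b) * c = a * (b * c)) :=
  have comm := mul_comm_of_mul_right_comm_of_left_identity h1 he
  ⟨comm, mul_assoc_of_mul_right_comm_of_mul_comm h1 comm⟩

/-- A Novikov algebra with a left unity is commutative and associative. -/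
theorem novikov_left_unity_comm_assoc {A : Type*} [NonUnitalNonAssocRing A]
    [Module ℂ A] [SMulCommClass ℂ A A] [IsScalarTower ℂ A A]
    (h1 : ∀ a b c : A, (a * b) * c = (a * c) * b)
    (h2 : ∀ a b c : A, (a * b) * c - a * (b * c) = (b * a) * c - b * (a * c))
    (e : A) (he : ∀ a : A, e * a = a) :
    (∀ a b : A, a * b = b * a) ∧ (∀ a b c : A, (a * b) * c = a * (b * c)) :=
  novikov_left_unity_comm_assoc_general h1 e he
end

section
/- There is no nonzero skew-symmetric bilinear form f on 𝕋_n satisfying both f(a·b, c) = f(a, c·b) and the cyclic condition f(a·b, c) + f(b·c, a) + f(c·a, b) = 0. -/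
open Finset

/-- Multiplication of the algebra `𝕋_n = ℂⁿ` (0-indexed): `e_i · e_j = e_{i+j}`
if `i+j ≤ n-1`, else `0`. -/
noncomputable def Tmul (n : ℕ) (a b : Fin n → ℂ) : Fin n → ℂ :=
  fun i => ∑ j : Fin n, ∑ k : Fin n,
    if (j : ℕ) + (k : ℕ) = (i : ℕ) then a j * b k else 0

/-- The bilinear form on `𝕋_n` with matrix `F`. -/
noncomputable def TForm (n : ℕ) (F : Matrix (Fin n) (Fin n) ℂ) (a b : Fin n → ℂ) : ℂ :=
  ∑ i : Fin n, ∑ j : Fin n, F i j * a i * b j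

lemma Tmul_comm (n : ℕ) (a b : Fin n → ℂ) : Tmul n a b = Tmul n b a := by
  funext i
  simp only [Tmul]
  rw [Finset.sum_comm]
  simp only [add_comm, mul_comm]

def Tone (n : ℕ) : Fin n → ℂ := fun i => if (i : ℕ) = 0 then 1 else 0

lemma Tone_mul (n : ℕ) (a : Fin n → ℂ) : Tmul n (Tone n) a = a := by
  funext i
  have hn : 0 < n := i.pos
  simp only [Tmul, Tone]
  rw [Finset.sum_eq_single ⟨0, hn⟩ (fun j _ hj => by simp [Fin.ext_iff] at hj; simp [hj])
    (by simp)]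
  simp [Fin.val_eq_val]

lemma TForm_single_single (n : ℕ) (F : Matrix (Fin n) (Fin n) ℂ) (i j : Fin n) :
    TForm n F (Pi.single i 1) (Pi.single j 1) = F i j := by
  simp [TForm, Pi.single_apply]

/-- Through the unit, `f(b, c) = f(1, c b)`, so commutativity of `𝕋_n` makes `f` symmetric. -/
lemma TForm_comm_of_quasiFrobenius (n : ℕ) (F : Matrix (Fin n) (Fin n) ℂ)
    (hqf : ∀ a b c : Fin n → ℂ, TForm n F (Tmul n a b) c = TForm n F a (Tmul n c b))
    (b c : Fin n → ℂ) : TForm n F b c = TForm n F c b := by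
  calc TForm n F b c = TForm n F (Tmul n (Tone n) b) c := by rw [Tone_mul]
    _ = TForm n F (Tone n) (Tmul n c b) := hqf _ _ _
    _ = TForm n F (Tone n) (Tmul n b c) := by rw [Tmul_comm]
    _ = TForm n F (Tmul n (Tone n) c) b := (hqf _ _ _).symm
    _ = TForm n F c b := by rw [Tone_mul]

theorem Tn_no_second_order_cocycle_general (n : ℕ) (F : Matrix (Fin n) (Fin n) ℂ)
    (hskew : ∀ i j, F i j = - F j i)
    (hqf : ∀ a b c : Fin n → ℂ,
      TForm n F (Tmul n a b) c = TForm n F a (Tmul n c b)) :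
    F = 0 := by
  ext i j
  have hsymm : F i j = F j i := by
    simpa only [TForm_single_single] using
      TForm_comm_of_quasiFrobenius n F hqf (Pi.single i 1) (Pi.single j 1)
  rw [Matrix.zero_apply]
  linear_combination (hskew i j + hsymm) / 2

/-- There is no nonzero skew-symmetric bilinear form on `𝕋_n` satisfying both
the quasi-Frobenius condition and the cyclic condition. -/
theorem Tn_no_second_order_cocycle (n : ℕ) (F : Matrix (Fin n) (Fin n) ℂ)
    (hskew : ∀ i j, F i j = - F j i)
    (hqf : ∀ a b c : Fin n → ℂ,
      TForm n F (Tmul n a b) c = TForm n F a (Tmul n c b))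
    (hcyc : ∀ a b c : Fin n → ℂ,
      TForm n F (Tmul n a b) c + TForm n F (Tmul n b c) a
        + TForm n F (Tmul n c a) b = 0) :
    F = 0 :=
  Tn_no_second_order_cocycle_general n F hskew hqf
end

section
/- A skew-symmetric bilinear form f = (f_{ij}) on 𝔸_n satisfies f(a·b, c) = f(a, c·b) and f(a·b, c) + f(b·c, a) + f(c·a, b) = 0 if and only if f_{ij} = 0 whenever both i ≠ n and j ≠ n. -/
/-! Right multiplication by `b` in `𝔸_n` is scaling by the last coordinate `b_n`, so both
`f(a·b, c)` and `f(a, c·b)` equal `b_n f(a, c)`: the first condition always holds and the second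
reads `b_n f(a, c) + c_n f(b, a) + a_n f(c, b) = 0`. Testing it on `(e_n, e_j, e_i)` with
`i, j ≠ n` gives `f_{ij} = 0`. Conversely, a skew form supported on the last row and column is
`f(x, y) = x_n g(y) - y_n g(x)` with `g = f(e_n, -)`, for which the cyclic sum cancels. -/

open Finset

/-- Multiplication of the algebra `𝔸_n = ℂⁿ`: `(a·b)^i = a^i b^n`. -/
noncomputable def Amul (n : ℕ) (hn : 0 < n) (a b : Fin n → ℂ) : Fin n → ℂ :=
  fun i => a i * b ⟨n - 1, Nat.sub_lt hn Nat.one_pos⟩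

/-- The bilinear form on `𝔸_n` with matrix `F`. -/
noncomputable def AForm (n : ℕ) (F : Matrix (Fin n) (Fin n) ℂ) (a b : Fin n → ℂ) : ℂ :=
  ∑ i : Fin n, ∑ j : Fin n, F i j * a i * b j

section

variable {n : ℕ} (F : Matrix (Fin n) (Fin n) ℂ)

lemma AForm_Amul_left (hn : 0 < n) (a b c : Fin n → ℂ) :
    AForm n F (Amul n hn a b) c = b ⟨n - 1, Nat.sub_lt hn Nat.one_pos⟩ * AForm n F a c := by
  simp only [AForm, Amul, mul_sum]
  exact sum_congr rfl fun i _ => sum_congr rfl fun j _ => by ring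

lemma AForm_Amul_right (hn : 0 < n) (a b c : Fin n → ℂ) :
    AForm n F a (Amul n hn c b) = b ⟨n - 1, Nat.sub_lt hn Nat.one_pos⟩ * AForm n F a c := by
  simp only [AForm, Amul, mul_sum]
  exact sum_congr rfl fun i _ => sum_congr rfl fun j _ => by ring

lemma AForm_single_single (p q : Fin n) :
    AForm n F (Pi.single p 1) (Pi.single q 1) = F p q := by
  simp [AForm, Pi.single_apply, mul_ite, sum_ite_eq']

lemma AForm_eq_mul_sub_mul {m : Fin n} (hskew : ∀ i j, F i j = -F j i)
    (hsupp : ∀ i j, i ≠ m → j ≠ m → F i j = 0) (x y : Fin n → ℂ) :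
    AForm n F x y = x m * ∑ j, F m j * y j - y m * ∑ i, F m i * x i := by
  have hmm : F m m = 0 := by linear_combination hskew m m / 2
  have hF : ∀ i j, F i j = (if i = m then F m j else 0) - (if j = m then F m i else 0) := by
    intro i j
    by_cases hi : i = m <;> by_cases hj : j = m
    · simp [hi, hj, hmm]
    · simp [hi, hj]
    · simp [hi, hj, hskew i m]
    · simp [hi, hj, hsupp i j hi hj]
  calc AForm n F x y
      = ∑ i, ∑ j, ((if i = m then F m j * x i * y j else 0)
          - (if j = m then F m i * x i * y j else 0)) :=
        sum_congr rfl fun i _ => sum_congr rfl fun j _ => by rw [hF i j]; split_ifs <;> ring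
    _ = x m * ∑ j, F m j * y j - y m * ∑ i, F m i * x i := by
        simp only [sum_sub_distrib, sum_ite_eq', mem_univ, if_true, mul_sum]
        rw [sum_comm]
        simp only [sum_ite_eq', mem_univ, if_true]
        congr 1 <;> exact sum_congr rfl fun _ _ => by ring

end

/-- A skew-symmetric bilinear form `f` on `𝔸_n` satisfies the quasi-Frobenius
and cyclic conditions iff `f_{ij} = 0` whenever both `i ≠ n` and `j ≠ n`. -/
theorem An_second_order_cocycle_classification (n : ℕ) (hn : 0 < n)
    (F : Matrix (Fin n) (Fin n) ℂ) (hskew : ∀ i j, F i j = - F j i) :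
    ((∀ a b c : Fin n → ℂ,
        AForm n F (Amul n hn a b) c = AForm n F a (Amul n hn c b)) ∧
      (∀ a b c : Fin n → ℂ,
        AForm n F (Amul n hn a b) c + AForm n F (Amul n hn b c) a
          + AForm n F (Amul n hn c a) b = 0)) ↔
    (∀ i j : Fin n, i ≠ ⟨n - 1, Nat.sub_lt hn Nat.one_pos⟩ →
        j ≠ ⟨n - 1, Nat.sub_lt hn Nat.one_pos⟩ → F i j = 0) := by
  set m : Fin n := ⟨n - 1, Nat.sub_lt hn Nat.one_pos⟩ with hm
  simp only [AForm_Amul_left, AForm_Amul_right, ← hm, implies_true, true_and]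
  constructor
  · intro hcyc i j hi hj
    have h := hcyc (Pi.single m 1) (Pi.single j 1) (Pi.single i 1)
    simpa [AForm_single_single, Pi.single_apply, hi, hj] using h
  · intro hsupp a b c
    rw [AForm_eq_mul_sub_mul F hskew hsupp a c, AForm_eq_mul_sub_mul F hskew hsupp b a,
      AForm_eq_mul_sub_mul F hskew hsupp c b]
    ring
end
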